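/- arXiv:1511.06618 — 4 statements merged into one kernel-verified Lean document; each statement's English description precedes it below -/
import Mathlib

section
/- Positive integers x, y satisfy the Pell-type equation x² − 10·y² = −1 if and only if there exists k ∈ ℕ such that x = p_{2k} and y = q_{2k}, where (p_k, q_k) are the integers determined by p_k + q_k·√10 = (3 + √10)^(k+1). -/
private def PQ : ℕ → ℤ × ℤ
  | 0 => (1, 0)
  | n + 1 => (3 * (PQ n).1 + 10 * (PQ n).2, (PQ n).1 + 3 * (PQ n).2)

private def P (n : ℕ) : ℤ := (PQ n).1
private def Q (n : ℕ) : ℤ := (PQ n).2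

private lemma P_zero : P 0 = 1 := rfl
private lemma Q_zero : Q 0 = 0 := rfl
private lemma P_succ (n : ℕ) : P (n + 1) = 3 * P n + 10 * Q n := rfl
private lemma Q_succ (n : ℕ) : Q (n + 1) = P n + 3 * Q n := rfl

private lemma norm_PQ : ∀ n, P n ^ 2 - 10 * Q n ^ 2 = (-1) ^ n := by
  intro n
  induction n with
  | zero => simp [P_zero, Q_zero]
  | succ n ih =>
    rw [P_succ, Q_succ, pow_succ]
    linear_combination (-1 : ℤ) * ih

private lemma PQ_nonneg : ∀ n, 1 ≤ P n ∧ 0 ≤ Q n := by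
  intro n
  induction n with
  | zero => simp [P_zero, Q_zero]
  | succ n ih =>
    rw [P_succ, Q_succ]
    exact ⟨by linarith [ih.1, ih.2], by linarith [ih.1, ih.2]⟩

private lemma irr10 : Irrational (Real.sqrt 10) := by
  rw [show ((10 : ℝ) = ((10 : ℕ) : ℝ)) by norm_num, irrational_sqrt_natCast_iff]
  rintro ⟨r, hr⟩
  have hr3 : r ≤ 3 := by nlinarith
  interval_cases r <;> omega

private lemma aux_eq (a b c d : ℤ) (h : (a : ℝ) + b * Real.sqrt 10 = c + d * Real.sqrt 10) :
    a = c ∧ b = d := by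
  by_cases hbd : b = d
  · subst hbd
    have hr : (a : ℝ) = c := by linarith
    exact ⟨by exact_mod_cast hr, rfl⟩
  · exfalso
    have hne : ((b : ℝ) - d) ≠ 0 := by
      intro hc
      exact hbd (by exact_mod_cast sub_eq_zero.mp hc)
    have hs : Real.sqrt 10 = ((c - a : ℤ) : ℝ) / ((b - d : ℤ) : ℝ) := by
      push_cast
      field_simp
      linarith
    have : Irrational (((c - a : ℤ) : ℝ) / ((b - d : ℤ) : ℝ)) := hs ▸ irr10
    rw [show (((c - a : ℤ) : ℝ) / ((b - d : ℤ) : ℝ)) = (((c - a : ℚ) / (b - d : ℚ) : ℚ) : ℝ) by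
      push_cast; ring] at this
    exact Rat.not_irrational _ this

private lemma classify : ∀ N : ℕ, ∀ x y : ℤ, x.natAbs ≤ N → 0 ≤ x → 0 ≤ y →
    (x ^ 2 - 10 * y ^ 2 = 1 ∨ x ^ 2 - 10 * y ^ 2 = -1) →
    ∃ n, x = P n ∧ y = Q n := by
  intro N
  induction N with
  | zero =>
    intro x y hN hx hy hc
    have hx0 : x = 0 := by omega
    subst hx0
    rcases hc with hc | hc
    · nlinarith [sq_nonneg y]
    · have hdvd : (10 : ℤ) ∣ 1 := ⟨y ^ 2, by linarith⟩
      norm_num at hdvd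
  | succ N ih =>
    intro x y hN hx hy hc
    rcases eq_or_lt_of_le hy with hy0 | hy1
    · -- y = 0
      have hy0' : y = 0 := hy0.symm
      subst hy0'
      rcases hc with hc | hc
      · have h1 : (x - 1) * (x + 1) = 0 := by nlinarith
        rcases mul_eq_zero.mp h1 with h | h
        · exact ⟨0, by rw [P_zero]; omega, by rw [Q_zero]⟩
        · omega
      · nlinarith
    · -- y ≥ 1
      have hy1' : 1 ≤ y := hy1
      have hx1 : 1 ≤ x := by
        rcases hc with hc | hc <;> nlinarith [sq_nonneg x]
      set x' := 10 * y - 3 * x with hx'def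
      set y' := x - 3 * y with hy'def
      have hx'0 : 0 ≤ x' := by
        rcases hc with hc | hc <;> nlinarith [sq_nonneg (10 * y - 3 * x), sq_nonneg (10 * y + 3 * x)]
      have hy'0 : 0 ≤ y' := by
        rcases hc with hc | hc <;> nlinarith [sq_nonneg (x - 3 * y), sq_nonneg (x + 3 * y)]
      have hlt : x' < x := by
        rcases hc with hc | hc <;> nlinarith [sq_nonneg (4 * x - 10 * y), sq_nonneg (4 * x + 10 * y)]
      have hN' : x'.natAbs ≤ N := by omega
      have hc' : x' ^ 2 - 10 * y' ^ 2 = 1 ∨ x' ^ 2 - 10 * y' ^ 2 = -1 := by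
        rcases hc with hc | hc
        · right; rw [hx'def, hy'def]; linear_combination -hc
        · left; rw [hx'def, hy'def]; linear_combination -hc
      obtain ⟨n, hn1, hn2⟩ := ih x' y' hN' hx'0 hy'0 hc'
      refine ⟨n + 1, ?_, ?_⟩
      · rw [P_succ, ← hn1, ← hn2, hx'def, hy'def]; ring
      · rw [Q_succ, ← hn1, ← hn2, hx'def, hy'def]; ring

private lemma pq_eq (p q : ℕ → ℤ)
    (hpq : ∀ k : ℕ,
      (p k : ℝ) + (q k : ℝ) * Real.sqrt 10 = (3 + Real.sqrt 10) ^ (k + 1)) :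
    ∀ k, p k = P (k + 1) ∧ q k = Q (k + 1) := by
  have hs : Real.sqrt 10 * Real.sqrt 10 = 10 :=
    Real.mul_self_sqrt (by norm_num : (0:ℝ) ≤ 10)
  intro k
  induction k with
  | zero =>
    have h0 := hpq 0
    rw [pow_one] at h0
    have h := aux_eq (p 0) (q 0) 3 1 (by rw [h0]; push_cast; ring)
    refine ⟨?_, ?_⟩
    · rw [h.1, P_succ, P_zero, Q_zero]; ring
    · rw [h.2, Q_succ, P_zero, Q_zero]; ring
  | succ k ih =>
    have hk := hpq k
    have hk1 := hpq (k + 1)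
    have hstep : ((p (k+1) : ℝ)) + (q (k+1) : ℝ) * Real.sqrt 10 =
        ((3 * p k + 10 * q k : ℤ) : ℝ) + ((p k + 3 * q k : ℤ) : ℝ) * Real.sqrt 10 := by
      rw [hk1, pow_succ, ← hk]
      push_cast
      linear_combination ((q k : ℝ)) * hs
    have h := aux_eq _ _ _ _ hstep
    refine ⟨?_, ?_⟩
    · rw [h.1, ih.1, ih.2, P_succ (k + 1)]
    · rw [h.2, ih.1, ih.2, Q_succ (k + 1)]

/-- Positive integers `x, y` satisfy `x² − 10·y² = −1` if and only if there exists `k`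
such that `x = p (2k)` and `y = q (2k)`, where `(p k, q k)` are determined by
`p k + q k·√10 = (3 + √10)^(k+1)`. -/
theorem stmt_2 (p q : ℕ → ℤ)
    (hpq : ∀ k : ℕ,
      (p k : ℝ) + (q k : ℝ) * Real.sqrt 10 = (3 + Real.sqrt 10) ^ (k + 1)) :
    ∀ x y : ℤ, 0 < x → 0 < y →
      (x ^ 2 - 10 * y ^ 2 = -1 ↔ ∃ k : ℕ, x = p (2 * k) ∧ y = q (2 * k)) := by
  have key := pq_eq p q hpq
  intro x y hx hy
  constructor
  · intro h
    obtain ⟨n, hn1, hn2⟩ := classify x.natAbs x y le_rfl hx.le hy.le (Or.inr h)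
    have hnorm := norm_PQ n
    rw [← hn1, ← hn2, h] at hnorm
    have hodd : Odd n := by
      rcases Nat.even_or_odd n with he | ho
      · exfalso
        rw [he.neg_one_pow] at hnorm
        norm_num at hnorm
      · exact ho
    obtain ⟨k, hk⟩ := hodd
    refine ⟨k, ?_, ?_⟩
    · rw [(key (2 * k)).1, hn1, hk]
    · rw [(key (2 * k)).2, hn2, hk]
  · rintro ⟨k, hxk, hyk⟩
    have hnorm := norm_PQ (2 * k + 1)
    rw [← (key (2 * k)).1, ← (key (2 * k)).2, ← hxk, ← hyk] at hnorm
    rw [hnorm, pow_succ, (Even.neg_one_pow (even_two_mul k))]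
    norm_num
end

section
/- Let (p_k, q_k), k ∈ ℕ, be the integers determined by p_k + q_k·√10 = (3 + √10)^(k+1), and set d_k := (p_{2k} − 3)/2 and m_k := (q_{2k} − 1)/2. Then for every odd k ≥ 1 one has d_k = p_{k−1}·p_k and m_k = p_{k−1}·q_k; equivalently, p_{2k} = 2·p_{k−1}·p_k + 3 and q_{2k} = 2·p_{k−1}·q_k + 1. -/
/-!
Write `α = 3 + √10`, a unit of norm `-1` in `ℤ[√10]`, so that `p k + q k √10 = α ^ (k + 1)`.
For `k` odd, `x = α ^ k` has norm `-1`, and the relation `x² = 2 Re(x)·x - N(x)` gives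
`α ^ (2k + 1) = x² α = 2 Re(x)·(x α) + α`. Reading off coordinates, with `Re x = p (k - 1)` and
`x α = α ^ (k + 1)`, yields `p (2k) = 2 p (k-1) p k + 3` and `q (2k) = 2 p (k-1) q k + 1`.
-/

namespace Zsqrtd

variable {d : ℤ}

theorem sq_eq_two_re_mul_sub_norm (x : ℤ√d) : x ^ 2 = 2 * x.re * x - x.norm := by
  ext <;> simp [norm_def, sq] <;> ring

theorem sq_mul_of_norm_eq_neg_one {x : ℤ√d} (hx : x.norm = -1) (y : ℤ√d) :
    x ^ 2 * y = 2 * x.re * (x * y) + y := by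
  rw [sq_eq_two_re_mul_sub_norm, hx]
  ring

theorem norm_pow (x : ℤ√d) (n : ℕ) : (x ^ n).norm = x.norm ^ n :=
  map_pow normMonoidHom x n

theorem eq_re_and_eq_im_of_toReal {a b : ℤ} {x : ℤ√d} (h0d : 0 ≤ d) (hd : ∀ n : ℤ, d ≠ n * n)
    (h : (a : ℝ) + b * √d = toReal h0d x) : a = x.re ∧ b = x.im := by
  have : (⟨a, b⟩ : ℤ√d) = x := toReal_injective h0d hd (by simpa using h)
  exact ⟨congrArg re this, congrArg im this⟩

end Zsqrtd

theorem ten_ne_mul_self (n : ℤ) : (10 : ℤ) ≠ n * n := by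
  intro h
  have : n ≤ 3 := by nlinarith
  have : -3 ≤ n := by nlinarith
  interval_cases n <;> omega

/-- Let `(p k, q k)` be determined by `p k + q k·√10 = (3 + √10)^(k+1)`, and let
`d k = (p (2k) − 3)/2` and `m k = (q (2k) − 1)/2`. Then for every odd `k ≥ 1` one has
`d k = p (k−1)·p k` and `m k = p (k−1)·q k`; equivalently, `p (2k) = 2·p (k−1)·p k + 3`
and `q (2k) = 2·p (k−1)·q k + 1`. -/
theorem stmt_11 (p q d m : ℕ → ℤ)
    (hpq : ∀ k : ℕ,
      (p k : ℝ) + (q k : ℝ) * Real.sqrt 10 = (3 + Real.sqrt 10) ^ (k + 1))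
    (hd : ∀ k : ℕ, p (2 * k) = 2 * d k + 3)
    (hm : ∀ k : ℕ, q (2 * k) = 2 * m k + 1) :
    ∀ k : ℕ, Odd k → 1 ≤ k →
      d k = p (k - 1) * p k ∧ m k = p (k - 1) * q k ∧
      p (2 * k) = 2 * p (k - 1) * p k + 3 ∧ q (2 * k) = 2 * p (k - 1) * q k + 1 := by
  set α : ℤ√10 := ⟨3, 1⟩
  have hP : ∀ n, p n = (α ^ (n + 1)).re ∧ q n = (α ^ (n + 1)).im := fun n =>
    Zsqrtd.eq_re_and_eq_im_of_toReal (by norm_num) ten_ne_mul_self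
      (by rw [map_pow]; norm_num [α, hpq n])
  intro k hk _
  obtain ⟨n, rfl⟩ : ∃ n, k = n + 1 := ⟨k - 1, by omega⟩
  have hα : α.norm = -1 := rfl
  have hnorm : (α ^ (n + 1)).norm = -1 := by
    rw [Zsqrtd.norm_pow, hα, hk.neg_one_pow]
  have hdouble : α ^ (2 * (n + 1) + 1) = 2 * p n * α ^ (n + 1 + 1) + α := by
    rw [show α ^ (2 * (n + 1) + 1) = (α ^ (n + 1)) ^ 2 * α by ring,
      Zsqrtd.sq_mul_of_norm_eq_neg_one hnorm, (hP n).1]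
    ring
  have hp : p (2 * (n + 1)) = 2 * p n * p (n + 1) + 3 := by
    simp [(hP _).1, hdouble, α]
  have hq : q (2 * (n + 1)) = 2 * p n * q (n + 1) + 1 := by
    simp [(hP _).2, hdouble, α]
  simp only [Nat.add_sub_cancel]
  exact ⟨by linarith [hd (n + 1)], by linarith [hm (n + 1)], hp, hq⟩
end

section
/- Let (p_k, q_k), k ∈ ℕ, be the integers determined by p_k + q_k·√10 = (3 + √10)^(k+1), and set d_k := (p_{2k} − 3)/2 and m_k := (q_{2k} − 1)/2. Then for every even k ≥ 2 one has d_k = q_{k−1}·(10·q_k) and m_k = q_{k−1}·p_k; equivalently, p_{2k} = 20·q_{k−1}·q_k + 3 and q_{2k} = 2·q_{k−1}·p_k + 1. -/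
private lemma ten_not_square : ∀ n : ℤ, (10:ℤ) ≠ n * n := by
  intro n h
  have h' : n.natAbs * n.natAbs = 10 := by
    have := Int.natAbs_mul_self (a := n)
    omega
  set a := n.natAbs with ha
  rcases le_or_gt a 3 with h3 | h4
  · have : a * a ≤ 3 * 3 := Nat.mul_le_mul h3 h3
    omega
  · have : 4 * 4 ≤ a * a := Nat.mul_le_mul h4 h4
    omega

noncomputable def f10 : ℤ√10 →+* ℝ :=
  Zsqrtd.lift ⟨Real.sqrt 10, Real.mul_self_sqrt (by norm_num)⟩

lemma f10_apply (z : ℤ√10) : f10 z = (z.re : ℝ) + (z.im : ℝ) * Real.sqrt 10 := rfl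

lemma f10_inj : Function.Injective f10 :=
  Zsqrtd.lift_injective _ ten_not_square

/-- Let `(p k, q k)` be determined by `p k + q k·√10 = (3 + √10)^(k+1)`, and let
`d k = (p (2k) − 3)/2` and `m k = (q (2k) − 1)/2`. Then for every even `k ≥ 2` one has
`d k = q (k−1)·(10·q k)` and `m k = q (k−1)·p k`; equivalently,
`p (2k) = 20·q (k−1)·q k + 3` and `q (2k) = 2·q (k−1)·p k + 1`. -/
theorem stmt_12 (p q d m : ℕ → ℤ)
    (hpq : ∀ k : ℕ,
      (p k : ℝ) + (q k : ℝ) * Real.sqrt 10 = (3 + Real.sqrt 10) ^ (k + 1))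
    (hd : ∀ k : ℕ, p (2 * k) = 2 * d k + 3)
    (hm : ∀ k : ℕ, q (2 * k) = 2 * m k + 1) :
    ∀ k : ℕ, Even k → 2 ≤ k →
      d k = q (k - 1) * (10 * q k) ∧ m k = q (k - 1) * p k ∧
      p (2 * k) = 20 * q (k - 1) * q k + 3 ∧ q (2 * k) = 2 * q (k - 1) * p k + 1 := by
  set z : ℤ√10 := ⟨3, 1⟩ with hz
  have hf10z : f10 z = 3 + Real.sqrt 10 := by
    rw [f10_apply]; push_cast; ring
  have key : ∀ k : ℕ, z ^ (k + 1) = ⟨p k, q k⟩ := by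
    intro k
    apply f10_inj
    rw [map_pow, hf10z, f10_apply, ← hpq k]
  intro k hk hk2
  obtain ⟨n, hn⟩ : ∃ n, k = n + 1 := ⟨k - 1, by omega⟩
  have hre : (z ^ (k + 1)).re = p k := by rw [key]
  have him : (z ^ (k + 1)).im = q k := by rw [key]
  have hre' : (z ^ k).re = p n := by rw [hn, key]
  have him' : (z ^ k).im = q n := by rw [hn, key]
  -- conjugate identity: star(z^k) * z^(k+1) = z  (k even)
  have hstarz : star z * z = (-1 : ℤ√10) := by
    ext <;> simp [hz, Zsqrtd.re_mul, Zsqrtd.im_mul]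
  have hconj : star (z ^ k) * z ^ (k + 1) = z := by
    rw [star_pow, pow_succ, ← mul_assoc, ← mul_pow, hstarz]
    rcases hk with ⟨j, hj⟩
    rw [show k = 2 * j by omega, pow_mul]
    norm_num
  -- product identity: z^(2k+1) = z^k * z^(k+1)
  have hprod : z ^ (2 * k + 1) = z ^ k * z ^ (k + 1) := by
    rw [← pow_add]; ring_nf
  have hre2 : (z ^ (2 * k + 1)).re = p (2 * k) := by rw [key]
  have him2 : (z ^ (2 * k + 1)).im = q (2 * k) := by rw [key]
  -- extract component equations
  have e1 : p n * p k - 10 * (q n * q k) = 3 := by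
    have t := congrArg Zsqrtd.re hconj
    rw [Zsqrtd.re_mul, Zsqrtd.re_star, Zsqrtd.im_star, hre, him, hre', him'] at t
    simp [hz] at t
    linarith
  have e2 : p n * q k - q n * p k = 1 := by
    have t := congrArg Zsqrtd.im hconj
    rw [Zsqrtd.im_mul, Zsqrtd.re_star, Zsqrtd.im_star, hre, him, hre', him'] at t
    simp [hz] at t
    linarith
  have e3 : p (2 * k) = p n * p k + 10 * (q n * q k) := by
    have := congrArg Zsqrtd.re hprod
    simp [Zsqrtd.re_mul, hre, him, hre', him', hre2] at this
    linarith
  have e4 : q (2 * k) = p n * q k + q n * p k := by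
    have := congrArg Zsqrtd.im hprod
    simp [Zsqrtd.im_mul, hre, him, hre', him', him2] at this
    linarith
  have hkn : k - 1 = n := by omega
  rw [hkn]
  have hdk := hd k
  have hmk := hm k
  refine ⟨by linarith, by linarith, by linarith, by linarith⟩
end

section
/- Let n ≥ 1 and let C = {x ∈ ℝⁿ : ⟨x, u_i⟩ ≥ 0 for i = 1, …, N} be a rational polyhedral convex cone, where u_1, …, u_N ∈ ℤⁿ. Let R ∈ ℤⁿ be an integer point lying in the topological interior of C. Then there exists a positive integer m such that for every integer point ξ ∈ ℤⁿ lying in the topological interior of C, the point m·ξ − R belongs to C. -/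
/-!
A nonzero linear functional is an open map, so on the interior of the cone every nonzero
`u i` pairs strictly positively with `ξ`. For integer points that pairing is an integer, hence
at least `1`, so any positive integer `m ≥ ⟪R, u i⟫` for all `i` works; a zero `u i`
imposes no condition.
-/

open RealInnerProductSpace

theorem StrongDual.interior_setOf_le_apply {E : Type*} [AddCommGroup E] [TopologicalSpace E]
    [ContinuousAdd E] [Module ℝ E] [ContinuousSMul ℝ E] {f : StrongDual ℝ E} (hf : f ≠ 0)
    (a : ℝ) : interior {x | a ≤ f x} = {x | a < f x} := by
  change interior (f ⁻¹' Set.Ici a) = f ⁻¹' Set.Ioi a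
  rw [← (f.isOpenMap_of_ne_zero hf).preimage_interior_eq_interior_preimage f.continuous,
    interior_Ici]

theorem interior_setOf_inner_nonneg {E : Type*} [NormedAddCommGroup E] [InnerProductSpace ℝ E]
    {v : E} (hv : v ≠ 0) : interior {x | 0 ≤ ⟪x, v⟫} = {x | 0 < ⟪x, v⟫} := by
  have hf : innerSL ℝ v ≠ 0 := fun h => hv <| by
    simpa using congrArg (fun f : StrongDual ℝ E => f v) h
  simpa only [innerSL_apply_apply, real_inner_comm v] using
    StrongDual.interior_setOf_le_apply hf 0

theorem inner_pos_of_mem_interior_setOf_forall_inner_nonneg {E ι : Type*}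
    [NormedAddCommGroup E] [InnerProductSpace ℝ E] {v : ι → E} {x : E}
    (hx : x ∈ interior {x | ∀ i, 0 ≤ ⟪x, v i⟫}) {i : ι} (hi : v i ≠ 0) : 0 < ⟪x, v i⟫ := by
  have := interior_mono (Set.ofPred_subset_ofPred.mpr fun _ hx => hx i) hx
  rwa [interior_setOf_inner_nonneg hi] at this

theorem inner_toLp_intCast {ι : Type*} [Fintype ι] (z w : ι → ℤ) :
    ⟪(WithLp.toLp 2 (fun i => (z i : ℝ)) : EuclideanSpace ℝ ι), WithLp.toLp 2 (fun i => (w i : ℝ))⟫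
      = ((z ⬝ᵥ w : ℤ) : ℝ) := by
  simp [PiLp.inner_apply, dotProduct, mul_comm]

theorem stmt_17_general (n : ℕ) (N : ℕ) (u : Fin N → Fin n → ℤ)
    (R : Fin n → ℤ) :
    ∃ m : ℕ, 0 < m ∧
      ∀ ξ : Fin n → ℤ,
        (WithLp.toLp 2 (fun i => (ξ i : ℝ)) : EuclideanSpace ℝ (Fin n)) ∈
          interior {x : EuclideanSpace ℝ (Fin n) |
            ∀ i : Fin N, 0 ≤ ⟪x, (WithLp.toLp 2 (fun j => (u i j : ℝ)) : EuclideanSpace ℝ (Fin n))⟫} →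
        (m : ℝ) • (WithLp.toLp 2 (fun i => (ξ i : ℝ)) : EuclideanSpace ℝ (Fin n)) -
            (WithLp.toLp 2 (fun i => (R i : ℝ)) : EuclideanSpace ℝ (Fin n)) ∈
          {x : EuclideanSpace ℝ (Fin n) |
            ∀ i : Fin N, 0 ≤ ⟪x, (WithLp.toLp 2 (fun j => (u i j : ℝ)) : EuclideanSpace ℝ (Fin n))⟫} := by
  obtain ⟨M, hM⟩ := Finite.exists_le fun i => (R ⬝ᵥ u i).toNat
  refine ⟨M + 1, M.succ_pos, fun ξ hξ i => ?_⟩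
  simp only [inner_sub_left, real_inner_smul_left, inner_toLp_intCast]
  have hRm : R ⬝ᵥ u i ≤ (M + 1 : ℕ) := by
    have := (R ⬝ᵥ u i).self_le_toNat
    have := hM i
    omega
  suffices R ⬝ᵥ u i ≤ (M + 1 : ℕ) * ξ ⬝ᵥ u i by
    rw [sub_nonneg]; exact_mod_cast this
  rcases eq_or_ne (u i) 0 with hu | hu
  · simp [hu]
  · have hv : (WithLp.toLp 2 (fun j => (u i j : ℝ)) : EuclideanSpace ℝ (Fin n)) ≠ 0 := by
      simpa [funext_iff] using hu
    have hpos : 0 < ξ ⬝ᵥ u i := by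
      have := inner_pos_of_mem_interior_setOf_forall_inner_nonneg hξ hv
      rw [inner_toLp_intCast] at this
      exact_mod_cast this
    nlinarith

/-- Let `C = {x ∈ ℝⁿ : ⟪x, u i⟫ ≥ 0 for all i}` be a rational polyhedral convex cone with
`u i ∈ ℤⁿ`, and let `R ∈ ℤⁿ` be an integer point in the interior of `C`. Then there is a
positive integer `m` such that for every integer point `ξ` in the interior of `C`, the
point `m·ξ − R` belongs to `C`. -/
theorem stmt_17 (n : ℕ) (hn : 1 ≤ n) (N : ℕ) (u : Fin N → Fin n → ℤ)
    (R : Fin n → ℤ)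
    (hR : (WithLp.toLp 2 (fun i => (R i : ℝ)) : EuclideanSpace ℝ (Fin n)) ∈
      interior {x : EuclideanSpace ℝ (Fin n) |
        ∀ i : Fin N, 0 ≤ ⟪x, (WithLp.toLp 2 (fun j => (u i j : ℝ)) : EuclideanSpace ℝ (Fin n))⟫}) :
    ∃ m : ℕ, 0 < m ∧
      ∀ ξ : Fin n → ℤ,
        (WithLp.toLp 2 (fun i => (ξ i : ℝ)) : EuclideanSpace ℝ (Fin n)) ∈
          interior {x : EuclideanSpace ℝ (Fin n) |
            ∀ i : Fin N, 0 ≤ ⟪x, (WithLp.toLp 2 (fun j => (u i j : ℝ)) : EuclideanSpace ℝ (Fin n))⟫} →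
        (m : ℝ) • (WithLp.toLp 2 (fun i => (ξ i : ℝ)) : EuclideanSpace ℝ (Fin n)) -
            (WithLp.toLp 2 (fun i => (R i : ℝ)) : EuclideanSpace ℝ (Fin n)) ∈
          {x : EuclideanSpace ℝ (Fin n) |
            ∀ i : Fin N, 0 ≤ ⟪x, (WithLp.toLp 2 (fun j => (u i j : ℝ)) : EuclideanSpace ℝ (Fin n))⟫} :=
  stmt_17_general n N u R
end
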